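/- arXiv:2508.10084 — 2 statements merged into one kernel-verified Lean document; each statement's English description precedes it below -/
import Mathlib

section
/- Let (R, Ad_Γ) be a graded von Neumann algebra with R commutative. Then there exists a projection P ∈ R such that: (i) every projection q ∈ R with q ≤ P satisfies ΓqΓ = q (i.e., q is even), and (ii) there exists a projection Q ∈ R with ΓQΓ = (I - P) - Q. -/
noncomputable section

variable {H : Type*} [NormedAddCommGroup H] [InnerProductSpace ℂ H] [CompleteSpace H]

/-- A self-adjoint unitary operator. -/
def IsSAU (Γ : H →L[ℂ] H) : Prop := star Γ = Γ ∧ Γ * Γ = 1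

/-- The even part of a graded set of operators. -/
def evenPart (R : Set (H →L[ℂ] H)) (Γ : H →L[ℂ] H) : Set (H →L[ℂ] H) :=
  {x | x ∈ R ∧ Γ * x * Γ = x}

/-- The odd part of a graded set of operators. -/
def oddPart (R : Set (H →L[ℂ] H)) (Γ : H →L[ℂ] H) : Set (H →L[ℂ] H) :=
  {x | x ∈ R ∧ Γ * x * Γ = -x}

/-- The center of a set of operators. -/
def centerSet (R : Set (H →L[ℂ] H)) : Set (H →L[ℂ] H) :=
  {x | x ∈ R ∧ ∀ y ∈ R, x * y = y * x}

/-- An (orthogonal) projection operator. -/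
def IsProjOp (e : H →L[ℂ] H) : Prop := e * e = e ∧ star e = e

/-- `e` is a subprojection of `f`. -/
def SubProj (e f : H →L[ℂ] H) : Prop := e * f = e ∧ f * e = e

/-- Murray–von Neumann equivalence of projections relative to `M`. -/
def MvNEquiv (M : Set (H →L[ℂ] H)) (e f : H →L[ℂ] H) : Prop :=
  ∃ v ∈ M, star v * v = e ∧ v * star v = f

/-- `e` is finite relative to `M`. -/
def FiniteProj (M : Set (H →L[ℂ] H)) (e : H →L[ℂ] H) : Prop :=
  ∀ f ∈ M, IsProjOp f → SubProj f e → MvNEquiv M f e → f = e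

/-- `e` is an abelian projection relative to `M`: the corner `eMe` is commutative. -/
def AbelianProj (M : Set (H →L[ℂ] H)) (e : H →L[ℂ] H) : Prop :=
  ∀ x ∈ M, ∀ y ∈ M, (e * x * e) * (e * y * e) = (e * y * e) * (e * x * e)

/-- A von Neumann algebra (given as a set) is of type III: no nonzero finite projections. -/
def TypeIII (M : Set (H →L[ℂ] H)) : Prop :=
  ∀ e ∈ M, IsProjOp e → FiniteProj M e → e = 0

/-- Type II₁ : finite with no nonzero abelian projections. -/
def TypeII1 (M : Set (H →L[ℂ] H)) : Prop :=
  FiniteProj M 1 ∧ ∀ e ∈ M, IsProjOp e → AbelianProj M e → e = 0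

/-- Type I_n : the identity is the sum of `n` orthogonal, mutually equivalent
abelian projections. -/
def TypeI (M : Set (H →L[ℂ] H)) (n : Cardinal) : Prop :=
  ∃ (ι : Type) (E : ι → H →L[ℂ] H), Cardinal.mk ι = n ∧
    (∀ a, E a ∈ M ∧ IsProjOp (E a) ∧ AbelianProj M (E a)) ∧
    (Pairwise fun a b => E a * E b = 0) ∧
    (∀ a b, MvNEquiv M (E a) (E b)) ∧
    (∀ v : H, HasSum (fun a => (E a) v) v)

/-- The scalar operators. -/
def scalarOps (H : Type*) [NormedAddCommGroup H] [InnerProductSpace ℂ H] [CompleteSpace H] :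
    Set (H →L[ℂ] H) := Set.range fun c : ℂ => c • (1 : H →L[ℂ] H)

/-- `M` is a factor. -/
def IsFactor (M : Set (H →L[ℂ] H)) : Prop := centerSet M = scalarOps H

/-- `R` is graded by the self-adjoint unitary `Γ`. -/
def GradedBy (R : Set (H →L[ℂ] H)) (Γ : H →L[ℂ] H) : Prop :=
  IsSAU Γ ∧ ∀ x ∈ R, Γ * x * Γ ∈ R

/-- The von Neumann algebra generated by a (star-closed, unital) set:
its double commutant. -/
def genVN (S : Set (H →L[ℂ] H)) : Set (H →L[ℂ] H) :=
  Set.centralizer (Set.centralizer S)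

/-- `c` is the central support of `T` in `M`. -/
def IsCentralSupport (M : Set (H →L[ℂ] H)) (T c : H →L[ℂ] H) : Prop :=
  c ∈ centerSet M ∧ IsProjOp c ∧ c * T = T ∧
    ∀ d ∈ centerSet M, IsProjOp d → d * T = T → c * d = c

/-!
Let `α = Ad Γ`. By Zorn's lemma choose a maximal set `m` of projections of `R` with
`e * α f = 0` for all `e f ∈ m`, and let `Q` project onto the closed span of their ranges.
Then `Q * α Q = 0`, and `P = 1 - Q - α Q` kills both `m` and `α m`. For a projection `q ≤ P`,
commutativity makes `r = q (1 - α q)` a projection below `P` with `r * α r = 0`, so maximality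
puts `r` into `m`; hence `r = r P = 0`, i.e. `q = q * α q`, and taking adjoints gives `α q = q`.
-/

lemma isProjOp_iff_isStarProjection {e : H →L[ℂ] H} : IsProjOp e ↔ IsStarProjection e :=
  ⟨fun h => ⟨h.1, h.2⟩, fun h => ⟨h.1, h.2⟩⟩

lemma IsSelfAdjoint.mul_eq_zero_symm {A : Type*} [NonUnitalNonAssocRing A] [StarRing A]
    {a b : A} (ha : IsSelfAdjoint a) (hb : IsSelfAdjoint b) (hab : a * b = 0) : b * a = 0 :=
  (ha.commute_of_mul_eq_zero hb hab).symm.eq.trans hab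

section Involution

variable {R A : Type*} [CommSemiring R] [Ring A] [StarRing A] [Algebra R A]
  {α : A ≃⋆ₐ[R] A} {q : A}

lemma IsStarProjection.mul_one_sub_map_mul_map_eq_zero (hα : ∀ x, α (α x) = x)
    (hq : IsStarProjection q) : q * (1 - α q) * α (q * (1 - α q)) = 0 := by
  rw [map_mul, map_sub, map_one, hα, mul_assoc, ← mul_assoc (1 - α q),
    (hq.map α).one_sub_mul_self, zero_mul, mul_zero]

lemma IsStarProjection.map_eq_self_of_mul_one_sub_map_eq_zero (hα : ∀ x, α (α x) = x)
    (hq : IsStarProjection q) (h : q * (1 - α q) = 0) : α q = q := by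
  have hq' : q * α q = q := by rwa [mul_sub, mul_one, sub_eq_zero, eq_comm] at h
  calc α q = α (q * α q) := by rw [hq']
    _ = star (q * α q) := by
      rw [map_mul, hα, star_mul, hq.isSelfAdjoint.star_eq, (hq.map α).isSelfAdjoint.star_eq]
    _ = q := by rw [hq', hq.isSelfAdjoint.star_eq]

end Involution

section RangeProjection

def sSupRangeProj (s : Set (H →L[ℂ] H)) : H →L[ℂ] H :=
  (⨆ e ∈ s, LinearMap.range (e : H →ₗ[ℂ] H)).topologicalClosure.starProjection

variable {s : Set (H →L[ℂ] H)}

lemma isStarProjection_sSupRangeProj (s : Set (H →L[ℂ] H)) :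
    IsStarProjection (sSupRangeProj s) :=
  isStarProjection_starProjection

lemma sSupRangeProj_mul_of_mem {e : H →L[ℂ] H} (he : e ∈ s) : sSupRangeProj s * e = e := by
  ext v
  refine Submodule.starProjection_eq_self_iff.2 (Submodule.le_topologicalClosure _ ?_)
  exact Submodule.mem_iSup_of_mem e (Submodule.mem_iSup_of_mem he (LinearMap.mem_range_self _ v))

lemma mul_sSupRangeProj_eq_zero {T : H →L[ℂ] H} (hT : ∀ e ∈ s, T * e = 0) :
    T * sSupRangeProj s = 0 := by
  have hle : (⨆ e ∈ s, LinearMap.range (e : H →ₗ[ℂ] H)).topologicalClosure ≤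
      LinearMap.ker (T : H →ₗ[ℂ] H) := by
    refine Submodule.topologicalClosure_minimal _ (iSup₂_le fun e he => ?_) T.isClosed_ker
    rintro _ ⟨v, rfl⟩
    exact congr($(hT e he) v)
  ext v
  exact hle (Submodule.coe_mem _)

lemma VonNeumannAlgebra.sSupRangeProj_mem (S : VonNeumannAlgebra H) (hs : s ⊆ S) :
    sSupRangeProj s ∈ S := by
  refine (VonNeumannAlgebra.IsStarProjection.mem_iff (isStarProjection_sSupRangeProj s) S).2
    fun y hy => ?_
  rw [sSupRangeProj, Submodule.range_starProjection]
  refine Submodule.topologicalClosure_mem_invtSubmodule ?_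
  rw [Module.End.mem_invtSubmodule]
  refine iSup₂_le fun e he => ?_
  rintro _ ⟨v, rfl⟩
  have hey : y (e v) = e (y v) :=
    congr($((VonNeumannAlgebra.mem_commutant_iff.1 hy e (hs he)).symm) v)
  exact Submodule.mem_comap.2 (hey ▸ Submodule.mem_iSup_of_mem e
    (Submodule.mem_iSup_of_mem he (LinearMap.mem_range_self _ (y v))))

end RangeProjection

def IsSAU.conjAut {Γ : H →L[ℂ] H} (hΓ : IsSAU Γ) : (H →L[ℂ] H) ≃⋆ₐ[ℂ] (H →L[ℂ] H) :=
  Unitary.conjStarAlgAut ℂ _ ⟨Γ, Unitary.mem_iff.2 (by rw [hΓ.1]; exact ⟨hΓ.2, hΓ.2⟩)⟩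

lemma IsSAU.conjAut_apply {Γ : H →L[ℂ] H} (hΓ : IsSAU Γ) (x : H →L[ℂ] H) :
    hΓ.conjAut x = Γ * x * Γ := by
  simp [IsSAU.conjAut, hΓ.1]

lemma IsSAU.conjAut_conjAut {Γ : H →L[ℂ] H} (hΓ : IsSAU Γ) (x : H →L[ℂ] H) :
    hΓ.conjAut (hΓ.conjAut x) = x := by
  simp only [hΓ.conjAut_apply]
  calc Γ * (Γ * x * Γ) * Γ = (Γ * Γ) * x * (Γ * Γ) := by noncomm_ring
    _ = x := by rw [hΓ.2, one_mul, mul_one]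

section TwistedOrthogonal

variable (R : VonNeumannAlgebra H) (α : (H →L[ℂ] H) ≃⋆ₐ[ℂ] (H →L[ℂ] H))

/-- Unlike the paper's family `Q_a`, the projections need not be mutually orthogonal: only
the closed span of their ranges enters. -/
def IsTwistedOrthogonal (s : Set (H →L[ℂ] H)) : Prop :=
  s ⊆ R ∧ (∀ e ∈ s, IsStarProjection e) ∧ ∀ e ∈ s, ∀ f ∈ s, e * α f = 0

lemma exists_maximal_isTwistedOrthogonal : ∃ m, Maximal (IsTwistedOrthogonal R α) m := by
  refine zorn_subset {s | IsTwistedOrthogonal R α s} fun c hc hchain => ?_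
  refine ⟨⋃₀ c, ⟨?_, ?_, ?_⟩, fun s hs => Set.subset_sUnion_of_mem hs⟩
  · exact Set.sUnion_subset fun s hs => (hc hs).1
  · rintro e ⟨s, hs, he⟩
    exact (hc hs).2.1 e he
  · rintro e ⟨s, hs, he⟩ f ⟨t, ht, hf⟩
    rcases hchain.total hs ht with hst | hts
    · exact (hc ht).2.2 e (hst he) f hf
    · exact (hc hs).2.2 e he f (hts hf)

variable {R α} {m : Set (H →L[ℂ] H)}

namespace IsTwistedOrthogonal

lemma map_mul_sSupRangeProj (hm : IsTwistedOrthogonal R α m) (hα : ∀ x, α (α x) = x)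
    {e : H →L[ℂ] H} (he : e ∈ m) : α e * sSupRangeProj m = 0 :=
  mul_sSupRangeProj_eq_zero fun f hf => by
    rw [← hα f, ← map_mul, hm.2.2 e he f hf, map_zero]

lemma sSupRangeProj_mul_map (hm : IsTwistedOrthogonal R α m) (hα : ∀ x, α (α x) = x)
    {e : H →L[ℂ] H} (he : e ∈ m) : sSupRangeProj m * α e = 0 :=
  ((hm.2.1 e he).map α).isSelfAdjoint.mul_eq_zero_symm
    (isStarProjection_sSupRangeProj m).isSelfAdjoint (hm.map_mul_sSupRangeProj hα he)

lemma map_sSupRangeProj_mul_self (hm : IsTwistedOrthogonal R α m)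
    (hα : ∀ x, α (α x) = x) : α (sSupRangeProj m) * sSupRangeProj m = 0 :=
  mul_sSupRangeProj_eq_zero fun f hf => by
    rw [← hα f, ← map_mul, hm.sSupRangeProj_mul_map hα hf, map_zero]

lemma isStarProjection_complement (hm : IsTwistedOrthogonal R α m)
    (hα : ∀ x, α (α x) = x) : IsStarProjection (1 - sSupRangeProj m - α (sSupRangeProj m)) := by
  have hQ := isStarProjection_sSupRangeProj m
  rw [sub_sub]
  exact (hQ.add (hQ.map α) ((hQ.map α).isSelfAdjoint.mul_eq_zero_symm hQ.isSelfAdjoint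
    (hm.map_sSupRangeProj_mul_self hα))).one_sub

lemma complement_mul (hm : IsTwistedOrthogonal R α m) (hα : ∀ x, α (α x) = x)
    {e : H →L[ℂ] H} (he : e ∈ m) :
    (1 - sSupRangeProj m - α (sSupRangeProj m)) * e = 0 := by
  rw [sub_mul, sub_mul, one_mul, sSupRangeProj_mul_of_mem he, ← hα e, ← map_mul, hα,
    hm.sSupRangeProj_mul_map hα he, map_zero, sub_self, sub_zero]

lemma complement_mul_map (hm : IsTwistedOrthogonal R α m) (hα : ∀ x, α (α x) = x)
    {e : H →L[ℂ] H} (he : e ∈ m) :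
    (1 - sSupRangeProj m - α (sSupRangeProj m)) * α e = 0 := by
  rw [sub_mul, sub_mul, one_mul, hm.sSupRangeProj_mul_map hα he, ← map_mul,
    sSupRangeProj_mul_of_mem he, sub_zero, sub_self]

lemma map_eq_self_of_maximal (hmax : Maximal (IsTwistedOrthogonal R α) m) (hα : ∀ x, α (α x) = x)
    (hαR : ∀ x ∈ R, α x ∈ R) (hcomm : ∀ x ∈ R, ∀ y ∈ R, x * y = y * x)
    {P : H →L[ℂ] H} (hPR : P ∈ R) (hP : IsSelfAdjoint P)
    (hPm : ∀ e ∈ m, P * e = 0) (hPαm : ∀ e ∈ m, P * α e = 0)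
    {q : H →L[ℂ] H} (hqR : q ∈ R) (hq : IsStarProjection q) (hqP : q * P = q) : α q = q := by
  have h1R : 1 - α q ∈ R := sub_mem (one_mem R) (hαR q hqR)
  set r := q * (1 - α q)
  have hr : IsStarProjection r := hq.mul (hq.map α).one_sub (hcomm q hqR _ h1R)
  have hrP : r * P = r := by rw [mul_assoc, hcomm _ h1R P hPR, ← mul_assoc, hqP]
  have hrαm : ∀ e ∈ m, r * α e = 0 := fun e he => by rw [← hrP, mul_assoc, hPαm e he, mul_zero]
  have hins : IsTwistedOrthogonal R α (insert r m) := by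
    refine ⟨Set.insert_subset (mul_mem hqR h1R) hmax.prop.1,
      Set.forall_mem_insert.2 ⟨hr, hmax.prop.2.1⟩, Set.forall_mem_insert.2 ⟨?_, fun e he => ?_⟩⟩
    · exact Set.forall_mem_insert.2 ⟨hq.mul_one_sub_map_mul_map_eq_zero hα, hrαm⟩
    · refine Set.forall_mem_insert.2 ⟨?_, hmax.prop.2.2 e he⟩
      rw [← hα e, ← map_mul, hr.isSelfAdjoint.mul_eq_zero_symm
        ((hmax.prop.2.1 e he).map α).isSelfAdjoint (hrαm e he), map_zero]
  have hr0 : r = 0 := by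
    rw [← hrP, hP.mul_eq_zero_symm hr.isSelfAdjoint (hPm r (hmax.mem_of_prop_insert hins))]
  exact hq.map_eq_self_of_mul_one_sub_map_eq_zero hα hr0

end IsTwistedOrthogonal

end TwistedOrthogonal

/-- in a commutative graded von Neumann algebra there is a central
projection `P` below which every projection is even, and a projection `Q` with
`ΓQΓ = (1 - P) - Q`. -/
theorem stmt_12 (R : VonNeumannAlgebra H) (Γ : H →L[ℂ] H) (hΓ : IsSAU Γ)
    (hinv : ∀ x ∈ R, Γ * x * Γ ∈ R)
    (hcomm : ∀ x ∈ R, ∀ y ∈ R, x * y = y * x) :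
    ∃ P ∈ (R : Set (H →L[ℂ] H)), IsProjOp P ∧
      (∀ q ∈ (R : Set (H →L[ℂ] H)), IsProjOp q → SubProj q P → Γ * q * Γ = q) ∧
      ∃ Q ∈ (R : Set (H →L[ℂ] H)), IsProjOp Q ∧ Γ * Q * Γ = (1 - P) - Q := by
  simp only [isProjOp_iff_isStarProjection, ← hΓ.conjAut_apply] at hinv ⊢
  have hα := hΓ.conjAut_conjAut
  obtain ⟨m, hm⟩ := exists_maximal_isTwistedOrthogonal R hΓ.conjAut
  set Q := sSupRangeProj m
  have hQR : Q ∈ R := R.sSupRangeProj_mem hm.prop.1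
  have hPR : 1 - Q - hΓ.conjAut Q ∈ R := sub_mem (sub_mem (one_mem R) hQR) (hinv Q hQR)
  have hP := hm.prop.isStarProjection_complement hα
  refine ⟨_, hPR, hP, fun q hqR hq hqP => ?_, Q, hQR, isStarProjection_sSupRangeProj m, by abel⟩
  exact IsTwistedOrthogonal.map_eq_self_of_maximal hm hα hinv hcomm hPR hP.isSelfAdjoint
    (fun e he => hm.prop.complement_mul hα he) (fun e he => hm.prop.complement_mul_map hα he)
    hqR hq hqP.1
end
end

section
/- Let (R, Ad_Γ) be a graded von Neumann algebra with center Z(R) satisfying Z(R) ∩ R^(0) = ℂI (i.e., (R, Ad_Γ) is central). Then either Z(R) = ℂI, or there exists a self-adjoint unitary b ∈ Z(R) ∩ R^(1) such that Z(R) ∩ R^(1) = ℂb. -/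
noncomputable section

variable {H : Type*} [NormedAddCommGroup H] [InnerProductSpace ℂ H] [CompleteSpace H]

/-! The grading `x ↦ Γ x Γ` preserves the center `Z`, so every central element is the sum of
an even and an odd central element, and the even ones are the scalars. A product of two odd central
elements is even and central, hence a scalar. If there is no nonzero odd central element, `Z = ℂ1`.
Otherwise the real or imaginary part of one gives a nonzero odd central self-adjoint `a`; its square
is a scalar `c`, and `c ‖v‖² = ‖a v‖²` shows `c = t²` with `t` real and nonzero, so `b = t⁻¹ a` is
an odd central self-adjoint unitary. Every odd central `x` then equals `(x b) b`, a multiple of `b`.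
-/

theorem IsSAU.mul_mul_cancel {Γ : H →L[ℂ] H} (hΓ : IsSAU Γ) (x : H →L[ℂ] H) :
    Γ * (Γ * x) = x := by
  rw [← mul_assoc, hΓ.2, one_mul]

theorem IsSAU.conj_conj {Γ : H →L[ℂ] H} (hΓ : IsSAU Γ) (x : H →L[ℂ] H) :
    Γ * (Γ * x * Γ) * Γ = x := by
  simp only [mul_assoc, hΓ.2, mul_one, hΓ.mul_mul_cancel]

theorem IsSAU.conj_mul {Γ : H →L[ℂ] H} (hΓ : IsSAU Γ) (x y : H →L[ℂ] H) :
    Γ * (x * y) * Γ = Γ * x * Γ * (Γ * y * Γ) := by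
  simp only [mul_assoc, hΓ.mul_mul_cancel]

theorem IsSAU.star_conj {Γ : H →L[ℂ] H} (hΓ : IsSAU Γ) (x : H →L[ℂ] H) :
    star (Γ * x * Γ) = Γ * star x * Γ := by
  rw [star_mul, star_mul, hΓ.1, mul_assoc]

theorem centerSet_eq_inf_centralizer (S : StarSubalgebra ℂ (H →L[ℂ] H)) :
    centerSet (S : Set (H →L[ℂ] H)) =
      ↑(S ⊓ StarSubalgebra.centralizer ℂ (S : Set (H →L[ℂ] H))) := by
  ext x
  simp only [centerSet, Set.mem_ofPred_eq, StarSubalgebra.coe_inf, Set.mem_inter_iff,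
    SetLike.mem_coe, StarSubalgebra.mem_centralizer_iff]
  exact and_congr_right fun _ => ⟨fun h g hg => ⟨(h g hg).symm, (h _ (star_mem hg)).symm⟩,
    fun h g hg => (h g hg).1.symm⟩

def centerStarSubalgebra (S : StarSubalgebra ℂ (H →L[ℂ] H)) : StarSubalgebra ℂ (H →L[ℂ] H) :=
  StarSubalgebra.copy (S ⊓ StarSubalgebra.centralizer ℂ (S : Set (H →L[ℂ] H)))
    (centerSet (S : Set (H →L[ℂ] H))) (centerSet_eq_inf_centralizer S)

section Grading

variable {S : StarSubalgebra ℂ (H →L[ℂ] H)} {Γ : H →L[ℂ] H}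

theorem conj_mem_centerSet {z : H →L[ℂ] H} (hΓ : IsSAU Γ) (hS : ∀ x ∈ S, Γ * x * Γ ∈ S)
    (hz : z ∈ centerSet (S : Set (H →L[ℂ] H))) : Γ * z * Γ ∈ centerSet (S : Set (H →L[ℂ] H)) := by
  refine ⟨hS z hz.1, fun y hy => ?_⟩
  have h := congrArg (fun w => Γ * w * Γ) (hz.2 _ (hS y hy))
  simpa only [mul_assoc, hΓ.2, mul_one, hΓ.mul_mul_cancel] using h

theorem star_mem_oddPart (hΓ : IsSAU Γ) {x : H →L[ℂ] H} (hx : x ∈ oddPart (S : Set _) Γ) :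
    star x ∈ oddPart (S : Set (H →L[ℂ] H)) Γ :=
  ⟨star_mem hx.1, by rw [← hΓ.star_conj, hx.2, star_neg]⟩

theorem mul_mem_evenPart (hΓ : IsSAU Γ) {x y : H →L[ℂ] H} (hx : x ∈ oddPart (S : Set _) Γ)
    (hy : y ∈ oddPart (S : Set _) Γ) : x * y ∈ evenPart (S : Set (H →L[ℂ] H)) Γ :=
  ⟨mul_mem hx.1 hy.1, by rw [hΓ.conj_mul, hx.2, hy.2, neg_mul_neg]⟩

variable (S Γ) in
def oddCenter : Submodule ℂ (H →L[ℂ] H) where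
  carrier := centerSet (S : Set (H →L[ℂ] H)) ∩ oddPart (S : Set (H →L[ℂ] H)) Γ
  zero_mem' := ⟨zero_mem (centerStarSubalgebra S), zero_mem S, by simp⟩
  add_mem' {x y} hx hy :=
    ⟨show x + y ∈ centerStarSubalgebra S from add_mem hx.1 hy.1, add_mem hx.2.1 hy.2.1, by
      rw [mul_add, add_mul, hx.2.2, hy.2.2, neg_add]⟩
  smul_mem' c x hx := ⟨(centerStarSubalgebra S).smul_mem hx.1 c, S.smul_mem hx.2.1 c, by
    rw [mul_smul_comm, smul_mul_assoc, hx.2.2, smul_neg]⟩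

theorem star_mem_oddCenter (hΓ : IsSAU Γ) {x : H →L[ℂ] H} (hx : x ∈ oddCenter S Γ) :
    star x ∈ oddCenter S Γ :=
  ⟨show star x ∈ centerStarSubalgebra S from star_mem hx.1, star_mem_oddPart hΓ hx.2⟩

theorem mul_mem_centerSet_inter_evenPart (hΓ : IsSAU Γ) {x y : H →L[ℂ] H}
    (hx : x ∈ oddCenter S Γ) (hy : y ∈ oddCenter S Γ) :
    x * y ∈ centerSet (S : Set (H →L[ℂ] H)) ∩ evenPart (S : Set (H →L[ℂ] H)) Γ :=
  ⟨show x * y ∈ centerStarSubalgebra S from mul_mem hx.1 hy.1, mul_mem_evenPart hΓ hx.2 hy.2⟩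

theorem exists_even_add_odd_eq (hΓ : IsSAU Γ) (hS : ∀ x ∈ S, Γ * x * Γ ∈ S) {z : H →L[ℂ] H}
    (hz : z ∈ centerSet (S : Set (H →L[ℂ] H))) :
    ∃ e ∈ centerSet (S : Set (H →L[ℂ] H)) ∩ evenPart (S : Set (H →L[ℂ] H)) Γ,
      ∃ o ∈ oddCenter S Γ, e + o = z := by
  have hz' : Γ * z * Γ ∈ centerStarSubalgebra S := conj_mem_centerSet hΓ hS hz
  have hz : z ∈ centerStarSubalgebra S := hz
  have heven := (centerStarSubalgebra S).smul_mem (add_mem hz hz') (2⁻¹ : ℂ)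
  have hodd := (centerStarSubalgebra S).smul_mem (sub_mem hz hz') (2⁻¹ : ℂ)
  refine ⟨_, ⟨heven, ?_⟩, _, ⟨hodd, ?_⟩, ?_⟩
  · exact ⟨heven.1, by
      rw [mul_smul_comm, smul_mul_assoc, mul_add, add_mul, hΓ.conj_conj, add_comm]⟩
  · exact ⟨hodd.1, by
      rw [mul_smul_comm, smul_mul_assoc, mul_sub, sub_mul, hΓ.conj_conj, ← smul_neg, neg_sub]⟩
  · rw [← smul_add, add_add_sub_cancel, ← two_smul ℂ, smul_smul, inv_mul_cancel₀ two_ne_zero,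
      one_smul]

theorem centerSet_eq_scalarOps_of_oddCenter_eq_bot (hΓ : IsSAU Γ)
    (hS : ∀ x ∈ S, Γ * x * Γ ∈ S)
    (hcentral : centerSet (S : Set (H →L[ℂ] H)) ∩ evenPart (S : Set (H →L[ℂ] H)) Γ = scalarOps H)
    (hodd : oddCenter S Γ = ⊥) : centerSet (S : Set (H →L[ℂ] H)) = scalarOps H := by
  refine subset_antisymm (fun z hz => ?_) (hcentral ▸ Set.inter_subset_left)
  obtain ⟨e, he, o, ho, rfl⟩ := exists_even_add_odd_eq hΓ hS hz
  rw [hodd, Submodule.mem_bot] at ho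
  rwa [ho, add_zero, ← hcentral]

theorem coe_oddCenter_eq_range_smul (hΓ : IsSAU Γ)
    (hcentral : centerSet (S : Set (H →L[ℂ] H)) ∩ evenPart (S : Set (H →L[ℂ] H)) Γ = scalarOps H)
    {b : H →L[ℂ] H} (hb : b ∈ oddCenter S Γ) (hbb : b * b = 1) :
    (oddCenter S Γ : Set (H →L[ℂ] H)) = Set.range fun c : ℂ => c • b := by
  refine subset_antisymm (fun x hx => ?_)
    (Set.range_subset_iff.2 fun c => Submodule.smul_mem _ c hb)
  obtain ⟨c, hc : c • 1 = x * b⟩ : x * b ∈ scalarOps H :=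
    hcentral ▸ mul_mem_centerSet_inter_evenPart hΓ hx hb
  refine ⟨c, ?_⟩
  calc c • b = x * b * b := by rw [← hc, smul_one_mul]
    _ = x := by rw [mul_assoc, hbb, mul_one]

end Grading

theorem Submodule.exists_isSelfAdjoint_ne_zero {A : Type*} [AddCommGroup A] [Module ℂ A]
    [StarAddMonoid A] [StarModule ℂ A] (p : Submodule ℂ A) (hp : ∀ x ∈ p, star x ∈ p)
    {z : A} (hz : z ∈ p) (hz0 : z ≠ 0) : ∃ a ∈ p, IsSelfAdjoint a ∧ a ≠ 0 := by
  have hre : (realPart z : A) ∈ p := by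
    rw [realPart_apply_coe, ← algebraMap_smul ℂ]
    exact p.smul_mem _ (p.add_mem hz (hp z hz))
  have him : (imaginaryPart z : A) ∈ p := by
    rw [imaginaryPart_apply_coe, ← algebraMap_smul ℂ (2⁻¹ : ℝ)]
    exact p.smul_mem _ (p.smul_mem _ (p.sub_mem hz (hp z hz)))
  by_contra! h
  apply hz0
  rw [← realPart_add_I_smul_imaginaryPart z, h _ hre (realPart z).2, h _ him (imaginaryPart z).2,
    smul_zero, add_zero]

theorem exists_sq_eq_of_mul_self_eq_smul_one {a : H →L[ℂ] H} (ha : IsSelfAdjoint a)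
    (ha0 : a ≠ 0) {c : ℂ} (hc : a * a = c • 1) : ∃ t : ℝ, t ≠ 0 ∧ c = (t : ℂ) ^ 2 := by
  obtain ⟨v, hv⟩ : ∃ v, a v ≠ 0 := by
    by_contra! h
    exact ha0 (ContinuousLinearMap.ext h)
  have hv0 : v ≠ 0 := by rintro rfl; simp at hv
  have key : (‖a v‖ : ℂ) ^ 2 = c * (‖v‖ : ℂ) ^ 2 :=
    calc (‖a v‖ : ℂ) ^ 2 = inner ℂ (a v) (a v) := by rw [inner_self_eq_norm_sq_to_K]; rfl
      _ = inner ℂ v ((a * a) v) := by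
        rw [← ContinuousLinearMap.adjoint_inner_right, ha.adjoint_eq]; rfl
      _ = c * inner ℂ v v := by rw [hc, smul_apply, one_apply_eq_self, inner_smul_right]
      _ = c * (‖v‖ : ℂ) ^ 2 := by rw [inner_self_eq_norm_sq_to_K]; rfl
  refine ⟨‖a v‖ / ‖v‖, div_ne_zero (norm_ne_zero_iff.2 hv) (norm_ne_zero_iff.2 hv0), ?_⟩
  have : (‖v‖ : ℂ) ≠ 0 := by exact_mod_cast norm_ne_zero_iff.2 hv0
  push_cast
  rw [div_pow, key, mul_div_cancel_right₀ _ (pow_ne_zero 2 this)]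

theorem exists_isSAU_smul_of_mul_self_eq_smul_one {a : H →L[ℂ] H} (ha : IsSelfAdjoint a)
    (ha0 : a ≠ 0) {c : ℂ} (hc : a * a = c • 1) : ∃ r : ℂ, IsSAU (r • a) := by
  obtain ⟨t, ht, rfl⟩ := exists_sq_eq_of_mul_self_eq_smul_one ha ha0 hc
  refine ⟨(t : ℂ)⁻¹, ?_, ?_⟩
  · rw [star_smul, ha.star_eq, star_inv₀, Complex.star_def, Complex.conj_ofReal]
  · have ht' : (t : ℂ) ≠ 0 := by exact_mod_cast ht
    rw [smul_mul_smul_comm, hc, smul_smul, show (t : ℂ)⁻¹ * (t : ℂ)⁻¹ * (t : ℂ) ^ 2 = 1 by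
      field_simp, one_smul]

/-- for a central graded von Neumann algebra, either `Z(R) = ℂ1` or
`Z(R) ∩ R¹ = ℂb` for some odd self-adjoint unitary `b ∈ Z(R)`. -/
theorem stmt_15 (R : VonNeumannAlgebra H) (Γ : H →L[ℂ] H) (hΓ : IsSAU Γ)
    (hinv : ∀ x ∈ R, Γ * x * Γ ∈ R)
    (hcentral : centerSet (R : Set (H →L[ℂ] H)) ∩
      evenPart (R : Set (H →L[ℂ] H)) Γ = scalarOps H) :
    centerSet (R : Set (H →L[ℂ] H)) = scalarOps H ∨
    ∃ b ∈ centerSet (R : Set (H →L[ℂ] H)) ∩ oddPart (R : Set (H →L[ℂ] H)) Γ,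
      star b = b ∧ b * b = 1 ∧
      centerSet (R : Set (H →L[ℂ] H)) ∩ oddPart (R : Set (H →L[ℂ] H)) Γ =
        Set.range fun c : ℂ => c • b := by
  rcases eq_or_ne (oddCenter R.toStarSubalgebra Γ) ⊥ with hodd | hodd
  · exact .inl (centerSet_eq_scalarOps_of_oddCenter_eq_bot hΓ hinv hcentral hodd)
  obtain ⟨z, hz, hz0⟩ := Submodule.exists_mem_ne_zero_of_ne_bot hodd
  obtain ⟨a, ha, hsa, ha0⟩ :=
    (oddCenter _ Γ).exists_isSelfAdjoint_ne_zero (fun _ => star_mem_oddCenter hΓ) hz hz0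
  obtain ⟨c, hc⟩ : a * a ∈ scalarOps H := hcentral ▸ mul_mem_centerSet_inter_evenPart hΓ ha ha
  obtain ⟨r, hr⟩ := exists_isSAU_smul_of_mul_self_eq_smul_one hsa ha0 hc.symm
  have hb : r • a ∈ oddCenter R.toStarSubalgebra Γ := Submodule.smul_mem _ r ha
  exact .inr ⟨r • a, hb, hr.1, hr.2, coe_oddCenter_eq_range_smul hΓ hcentral hb hr.2⟩
end
end
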